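/- arXiv:1512.04209 — 3 statements merged into one kernel-verified Lean document; each statement's English description precedes it below -/
import Mathlib

section
/- If a simplicial set X is n-coskeletal, then for every m ≥ n + 2 and every 0 ≤ k ≤ m, every horn Λ[m,k] → X has a unique filler Δ[m] → X. -/
/-!
For `m ≥ n + 2` every simplex of `Δ[m]` of dimension at most `n` misses a vertex other than `k`,
so it lies in `Λ[m, k]`: the horn inclusion becomes an isomorphism after truncation to dimensions
`≤ n`. Since `cosk n` is a fully faithful right adjoint of this truncation, maps into an
`n`-coskeletal simplicial set cannot distinguish morphisms that truncation inverts.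
-/

open CategoryTheory Simplicial Opposite

universe u

lemma CategoryTheory.Adjunction.bijective_precomp_of_isIso_unit_app {C D : Type*} [Category* C]
    [Category* D] {F : C ⥤ D} {G : D ⥤ C} (adj : G ⊣ F) [F.Full] [F.Faithful] {X Y Z : D}
    (f : X ⟶ Y) [IsIso (G.map f)] [IsIso (adj.unit.app Z)] :
    Function.Bijective (fun g : Y ⟶ Z => f ≫ g) := by
  have hf := (ObjectProperty.isLocal_iff_isIso_map adj f).2 inferInstance
  rw [← ObjectProperty.isoClosure_isLocal] at hf
  exact hf Z ⟨_, ⟨_, rfl⟩, ⟨asIso (adj.unit.app Z)⟩⟩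

lemma SSet.Subcomplex.isIso_truncation_map_ι {X : SSet.{u}} (A : X.Subcomplex) (n : ℕ)
    (hA : ∀ j ≤ n, A.obj (op ⦋j⦌) = .univ) : IsIso ((truncation n).map A.ι) := by
  have (a : (SimplexCategory.Truncated n)ᵒᵖ) : IsIso (((truncation n).map A.ι).app a) := by
    obtain ⟨⟨a, ha⟩⟩ := a
    have hAa : A.obj (op a) = .univ := by simpa using hA a.len ha
    rw [isIso_iff_bijective]
    exact ⟨Subtype.val_injective, fun x => ⟨⟨x, hAa ▸ Set.mem_univ x⟩, rfl⟩⟩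
  exact NatIso.isIso_of_isIso_app _

/-- If a simplicial set `X` is `n`-coskeletal (the unit `X ⟶ cosk_n X` is an
isomorphism), then for every `m ≥ n + 2` and every `k : Fin (m+1)` (`0 ≤ k ≤ m`),
every horn `Λ[m, k] ⟶ X` has a unique filler `Δ[m] ⟶ X`. -/
theorem coskeletal_unique_horn_fillers (X : SSet.{u}) (n : ℕ)
    (hX : IsIso ((SSet.coskAdj n).unit.app X))
    (m : ℕ) (hm : n + 2 ≤ m) (k : Fin (m + 1)) (σ₀ : (Λ[m, k] : SSet.{u}) ⟶ X) :
    ∃! σ : Δ[m] ⟶ X, (SSet.horn.{u} m k).ι ≫ σ = σ₀ := by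
  have := (SSet.horn.{u} m k).isIso_truncation_map_ι n fun j _ => SSet.horn_obj_eq_univ k j
  exact ((SSet.coskAdj n).bijective_precomp_of_isIso_unit_app _).existsUnique σ₀
end

section
/- If a simplicial set X has unique horn fillers in all dimensions m ≥ n (i.e., Hom(Δ[m],X) → Hom(Λ[m,k],X) is a bijection for all m ≥ n and 0 ≤ k ≤ m), then X is n-coskeletal. -/
/-!
By Yoneda, the unit `X ⟶ cosk_n X` is an isomorphism as soon as truncation
`(Δ[d] ⟶ X) → (τ_n Δ[d] ⟶ τ_n X)` is bijective for every `d`. For `d ≤ n` this is the Yoneda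
lemma in the truncated category. For `d = p + 1 > n` induct on `d`. Since `Λ[p + 1, 0] ≤ ∂Δ[p + 1]`,
unique horn filling makes a `(p + 1)`-simplex determined by its faces, hence by its truncation.
Conversely, a map `τ_n Δ[p + 1] ⟶ τ_n X` has faces `ξ j : Δ[p] ⟶ X`, compatible by injectivity in
dimension `p - 1`; the faces `j ≠ 0` form a horn with a filler `x`, whose face `d₀ x` has the same
boundary as `ξ 0` and thus equals it since `p ≥ n`. Every simplex of dimension `≤ n < p + 1` of
`Δ[p + 1]` lies in a face, so `τ_n x` is the given map.
-/

open CategoryTheory Simplicial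

universe u

namespace SSet

open Opposite

lemma isIso_of_bijective_comp {X Y : SSet.{u}} (f : X ⟶ Y)
    (hf : ∀ d : ℕ, Function.Bijective (fun σ : Δ[d] ⟶ X => σ ≫ f)) : IsIso f := by
  have (c : SimplexCategoryᵒᵖ) : IsIso (f.app c) := by
    induction c using Opposite.rec with | op c => ?_
    induction c using SimplexCategory.rec with | _ d => ?_
    rw [isIso_iff_bijective]
    have hfac : ⇑(f.app (op ⦋d⦌)) =
        yonedaEquiv ∘ (fun σ : Δ[d] ⟶ X => σ ≫ f) ∘ yonedaEquiv.symm := by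
      funext y
      simp [yonedaEquiv_symm_comp]
    rw [hfac]
    exact yonedaEquiv.bijective.comp ((hf d).comp yonedaEquiv.symm.bijective)
  exact NatIso.isIso_of_isIso_app f

lemma isIso_coskAdj_unit_app_of_bijective {X : SSet.{u}} (n : ℕ)
    (h : ∀ d : ℕ, Function.Bijective (fun σ : Δ[d] ⟶ X => (truncation n).map σ)) :
    IsIso ((coskAdj n).unit.app X) := by
  refine isIso_of_bijective_comp _ fun d => ?_
  have hfac : (fun σ : Δ[d] ⟶ X => σ ≫ (coskAdj n).unit.app X) =
      (coskAdj n).homEquiv _ _ ∘ fun σ => (truncation n).map σ := by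
    funext σ
    exact ((coskAdj n).unit_naturality σ).symm.trans ((coskAdj n).homEquiv_unit _ _ _).symm
  exact hfac ▸ ((coskAdj n).homEquiv _ _).bijective.comp (h d)

variable {X : SSet.{u}}

lemma horn_le_boundary {m : ℕ} (k : Fin (m + 1)) : Λ[m, k] ≤ ∂Δ[m] :=
  (stdSimplex.le_boundary_iff _).2 fun h =>
    objEquiv_symm_notMem_horn_of_isIso k (𝟙 _) (h ▸ trivial)

lemma boundary_ι_comp_injective {m : ℕ} {k : Fin (m + 1)}
    (hk : Function.Injective (fun σ : Δ[m] ⟶ X => Λ[m, k].ι ≫ σ)) :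
    Function.Injective (fun σ : Δ[m] ⟶ X => ∂Δ[m].ι ≫ σ) := fun σ τ h => hk <| by
  simp only [← Subcomplex.homOfLE_ι (horn_le_boundary k), Category.assoc]
  exact congrArg _ h

lemma truncation_stdSimplex_hom_ext {n m : ℕ} (hnm : n ≤ m) {Y : Truncated.{u} n}
    {F G : (truncation n).obj Δ[m + 1] ⟶ Y}
    (h : ∀ j, (truncation n).map (stdSimplex.δ j) ≫ F = (truncation n).map (stdSimplex.δ j) ≫ G) :
    F = G := by
  refine Truncated.hom_ext fun ⟨⟨c, hc⟩⟩ => ?_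
  induction c using SimplexCategory.rec with | _ d => ?_
  ext a
  have ha : a ∈ (∂Δ[m + 1]).obj (op ⦋d⦌) := by
    rw [boundary_obj_eq_univ d (m + 1) (by simp at hc; omega)]
    trivial
  rw [boundary_eq_iSup, Subfunctor.iSup_obj] at ha
  obtain ⟨j, hj⟩ := Set.mem_iUnion.1 ha
  rw [← stdSimplex.range_δ] at hj
  obtain ⟨b, rfl⟩ := hj
  exact ConcreteCategory.congr_hom (congr_app (h j) (op ⟨⦋d⦌, hc⟩)) b

lemma truncation_map_bijective_of_le {n d : ℕ} (hd : d ≤ n) :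
    Function.Bijective (fun σ : Δ[d] ⟶ X => (truncation n).map σ) := by
  let e : ((truncation n).obj Δ[d] ⟶ (truncation n).obj X) → X _⦋d⦌ :=
    fun F => F.app (op ⟨⦋d⦌, hd⟩) (stdSimplex.objEquiv.symm (𝟙 ⦋d⦌))
  have he : Function.Injective e := by
    intro F G hFG
    refine Truncated.hom_ext fun ⟨c, hc⟩ => ?_
    ext a
    let f : (⟨c, hc⟩ : SimplexCategory.Truncated n) ⟶ ⟨⦋d⦌, hd⟩ :=
      ObjectProperty.homMk (stdSimplex.objEquiv a)
    have ha : a = ((truncation n).obj Δ[d]).map f.op (stdSimplex.objEquiv.symm (𝟙 ⦋d⦌)) :=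
      stdSimplex.objEquiv.injective (Category.comp_id _).symm
    rw [ha]
    exact (NatTrans.naturality_apply F f.op _).trans
      ((congrArg _ hFG).trans (NatTrans.naturality_apply G f.op _).symm)
  have hcomp : e ∘ (fun σ : Δ[d] ⟶ X => (truncation n).map σ) = yonedaEquiv := rfl
  refine ⟨fun σ τ hστ => yonedaEquiv.injective (congrArg e hστ), fun F => ?_⟩
  exact ⟨yonedaEquiv.symm (e F), he (congrFun hcomp _ |>.trans (yonedaEquiv.apply_symm_apply _))⟩

lemma stdSimplex_δ_pred_comp_δ {q : ℕ} {j k : Fin (q + 3)} (hjk : j < k) :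
    stdSimplex.{u}.δ (k.pred (Fin.ne_zero_of_lt hjk)) ≫ stdSimplex.δ j =
      stdSimplex.δ (j.castPred (Fin.ne_last_of_lt hjk)) ≫ stdSimplex.δ k :=
  -- both sides are the inclusion of the face `{j, k}ᶜ`
  (stdSimplex.facePairComplIso_hom_ι' j k hjk).symm.trans
    (stdSimplex.facePairComplIso_hom_ι j k hjk)

lemma truncation_map_injective_succ {n p : ℕ}
    (hp : Function.Injective (fun σ : Δ[p] ⟶ X => (truncation n).map σ))
    (hb : Function.Injective (fun σ : Δ[p + 1] ⟶ X => ∂Δ[p + 1].ι ≫ σ)) :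
    Function.Injective (fun σ : Δ[p + 1] ⟶ X => (truncation n).map σ) := by
  intro x y hxy
  refine hb (boundary.hom_ext fun j => ?_)
  simp only [boundary.ι_ι_assoc]
  exact hp (by simp only [Functor.map_comp]; exact congrArg _ hxy)

lemma δ_pred_comp_eq_of_truncation_map_eq {n q : ℕ}
    (hq : Function.Injective (fun σ : Δ[q] ⟶ X => (truncation n).map σ))
    {G : (truncation n).obj Δ[q + 2] ⟶ (truncation n).obj X} {ξ : Fin (q + 3) → (Δ[q + 1] ⟶ X)}
    (hξ : ∀ j, (truncation n).map (ξ j) = (truncation n).map (stdSimplex.δ j) ≫ G)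
    {j k : Fin (q + 3)} (hjk : j < k) :
    stdSimplex.δ (k.pred (Fin.ne_zero_of_lt hjk)) ≫ ξ j =
      stdSimplex.δ (j.castPred (Fin.ne_last_of_lt hjk)) ≫ ξ k :=
  hq <| by
    dsimp only
    rw [Functor.map_comp, Functor.map_comp, hξ, hξ, ← Category.assoc, ← Category.assoc,
      ← Functor.map_comp, ← Functor.map_comp, stdSimplex_δ_pred_comp_δ hjk]

lemma truncation_map_surjective_succ {n p : ℕ} (hnp : n ≤ p)
    (hinj : ∀ d < p, Function.Injective (fun σ : Δ[d] ⟶ X => (truncation n).map σ))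
    (hsurj : Function.Surjective (fun σ : Δ[p] ⟶ X => (truncation n).map σ))
    (hb : Function.Injective (fun σ : Δ[p] ⟶ X => ∂Δ[p].ι ≫ σ))
    (hfill : Function.Surjective (fun σ : Δ[p + 1] ⟶ X => Λ[p + 1, 0].ι ≫ σ)) :
    Function.Surjective (fun σ : Δ[p + 1] ⟶ X => (truncation n).map σ) := by
  intro G
  choose ξ hξ using fun j => hsurj ((truncation n).map (stdSimplex.δ j) ≫ G)
  dsimp only at hξ
  obtain ⟨x, hx⟩ : ∃ x : Δ[p + 1] ⟶ X, ∀ j ≠ 0, stdSimplex.δ j ≫ x = ξ j := by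
    have hcompat : horn.IsCompatible (i := (0 : Fin (p + 2))) fun j _ => ξ j := by
      cases p with
      | zero => trivial
      | succ q =>
        exact fun j k _ _ hjk => δ_pred_comp_eq_of_truncation_map_eq (hinj q q.lt_succ_self) hξ hjk
    obtain ⟨x, hx : Λ[p + 1, 0].ι ≫ x = hcompat.desc⟩ := hfill hcompat.desc
    exact ⟨x, fun j hj => by rw [← horn.ι_ι 0 j hj, Category.assoc, hx, hcompat.ι_desc]⟩
  have hx₀ : stdSimplex.δ 0 ≫ x = ξ 0 := hb <| by
    cases p with
    | zero => exact boundary.hom_ext₀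
    | succ q =>
      refine boundary.hom_ext fun i => ?_
      have hcompat := δ_pred_comp_eq_of_truncation_map_eq (hinj q q.lt_succ_self) hξ
        (Fin.succ_pos i)
      simp only [Fin.pred_succ, Fin.castPred_zero] at hcompat
      simp only [boundary.ι_ι_assoc]
      have hδ := stdSimplex.{u}.δ_comp_δ (Fin.zero_le i)
      rw [Fin.castSucc_zero] at hδ
      rw [← Category.assoc, ← hδ, Category.assoc, hx _ (Fin.succ_ne_zero i), hcompat]
  refine ⟨x, truncation_stdSimplex_hom_ext hnp fun j => ?_⟩
  have hxj : stdSimplex.δ j ≫ x = ξ j := if hj : j = 0 then hj ▸ hx₀ else hx j hj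
  rw [← Functor.map_comp, hxj, hξ]

lemma truncation_map_bijective_of_unique_horn_fillers {n : ℕ}
    (h : ∀ m : ℕ, n ≤ m → Function.Bijective (fun σ : Δ[m] ⟶ X => Λ[m, 0].ι ≫ σ)) (d : ℕ) :
    Function.Bijective (fun σ : Δ[d] ⟶ X => (truncation n).map σ) := by
  induction d using Nat.strong_induction_on with | _ d ih => ?_
  rcases le_or_gt d n with hd | hd
  · exact truncation_map_bijective_of_le hd
  obtain ⟨p, rfl⟩ := Nat.exists_eq_add_one_of_ne_zero (by omega : d ≠ 0)
  have hb (m : ℕ) (hm : n ≤ m) := boundary_ι_comp_injective (h m hm).injective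
  exact ⟨truncation_map_injective_succ (ih p p.lt_succ_self).1 (hb _ (by omega)),
    truncation_map_surjective_succ (by omega) (fun d hd => (ih d (by omega)).1)
      (ih p p.lt_succ_self).2 (hb p (by omega)) (h _ (by omega)).2⟩

end SSet

/-- If a simplicial set `X` has unique horn fillers in all dimensions `m ≥ n`
(i.e. `Hom(Δ[m], X) → Hom(Λ[m,k], X)` is a bijection for all `m ≥ n` and all
`k : Fin (m+1)`), then `X` is `n`-coskeletal: the unit map `X ⟶ cosk_n X` is an
isomorphism. -/
theorem coskeletal_of_unique_horn_fillers (X : SSet.{u}) (n : ℕ)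
    (h : ∀ m : ℕ, n ≤ m → ∀ k : Fin (m + 1),
      Function.Bijective (fun σ : Δ[m] ⟶ X => (SSet.horn m k).ι ≫ σ)) :
    IsIso ((SSet.coskAdj n).unit.app X) :=
  SSet.isIso_coskAdj_unit_app_of_bijective n
    (SSet.truncation_map_bijective_of_unique_horn_fillers fun m hm => h m hm 0)
end

section
/- The spine Sp(n) of the standard n-simplex, i.e. the union of the edges Δ[1]{i, i+1} for 0 ≤ i ≤ n−1, has the property that the inclusion Sp(n) → Δ[n] is an inner anodyne map: it lies in the saturation of inner horn inclusions; in particular, every quasi-category X has the right lifting property with respect to Sp(n) → Δ[n]. -/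
open CategoryTheory Simplicial

universe u

/-- The spine `Sp(n)` of the standard `n`-simplex: the simplicial subset of `Δ[n]`
which is the union of the edges `Δ[1]{i, i+1}` for `0 ≤ i ≤ n-1`.  A simplex of `Δ[n]`
belongs to the spine iff all its vertices lie in some set `{i, i+1}`. -/
def SSet.spineSubcomplex (n : ℕ) : SSet.{u} where
  obj l := { α : Δ[n].obj l //
    ∃ i : ℕ, ∀ b ∈ Set.range (SSet.stdSimplex.asOrderHom α), i ≤ (b : ℕ) ∧ (b : ℕ) ≤ i + 1 }
  map {l₁ l₂} f := TypeCat.ofHom fun α =>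
    ⟨Δ[n].map f α.1, by
      obtain ⟨i, hi⟩ := α.2
      refine ⟨i, fun b hb => hi b ?_⟩
      obtain ⟨a, ha⟩ := hb
      exact ⟨f.unop.toOrderHom a, ha⟩⟩

/-- The inclusion `Sp(n) ⟶ Δ[n]` of the spine into the standard simplex. -/
def SSet.spineSubcomplexInclusion (n : ℕ) : SSet.spineSubcomplex.{u} n ⟶ Δ[n] where
  app _ := TypeCat.ofHom fun α => α.1


/-!
A nondegenerate simplex of `Δ[n]` outside the spine has two vertices at distance at least `2`.
Let `t` be its last vertex. If `t - 1` is also a vertex, pair the simplex with its face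
obtained by deleting `t - 1`; otherwise pair it with the simplex obtained by adding `t - 1`.
This is a pairing in the sense of Moss: the paired face is a codimension one face opposite
a vertex which is neither the first nor the last one (so only inner horns are involved), and it
is regular because a type (II) simplex which is a face of the type (I) partner of another one
has a smaller last vertex, or the same last vertex and a smaller dimension. Hence `Sp(n) ⟶ Δ[n]`
is a (strong) inner anodyne extension, and quasi-categories are the simplicial sets `X` such that
`X ⟶ *` is an inner fibration.
-/

namespace SSet.stdSimplex

variable {n : ℕ}

/-- `SSet.spineSubcomplex n` as a subcomplex: `(spine n).ι` is definitionally
`SSet.spineSubcomplexInclusion n`. -/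
def spine (n : ℕ) : (Δ[n] : SSet.{u}).Subcomplex where
  obj _ :=
    { α | ∃ i : ℕ, ∀ b ∈ Set.range (asOrderHom α), i ≤ (b : ℕ) ∧ (b : ℕ) ≤ i + 1 }
  map f α := by
    rintro ⟨i, hi⟩
    exact ⟨i, fun b ⟨a, ha⟩ => hi b ⟨f.unop.toOrderHom a, ha⟩⟩

lemma mem_spine_iff {d : ℕ} (x : (Δ[n] : SSet.{u}) _⦋d⦌) :
    x ∈ (spine n).obj _ ↔ ∃ i : ℕ, ∀ j, i ≤ (x j : ℕ) ∧ (x j : ℕ) ≤ i + 1 :=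
  exists_congr fun _ => Set.forall_mem_range

lemma notMem_spine_of_add_two_le {d : ℕ} (x : (Δ[n] : SSet.{u}) _⦋d⦌) {i j : Fin (d + 1)}
    (h : (x i : ℕ) + 2 ≤ x j) : x ∉ (spine n).obj _ := by
  rw [mem_spine_iff]
  rintro ⟨k, hk⟩
  have := hk i
  have := hk j
  omega

lemma ofSimplex_eq_face_image {d : ℕ} (x : (Δ[n] : SSet.{u}) _⦋d⦌) (hx : StrictMono x) :
    Subcomplex.ofSimplex x = face (Finset.univ.image x) := by
  rw [← face_nonDegenerateEquiv' ⟨x, (mem_nonDegenerate_iff_strictMono x).2 hx⟩]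
  rfl

lemma ofSimplex_le_ofSimplex_iff {d d' : ℕ} {x : (Δ[n] : SSet.{u}) _⦋d⦌}
    {y : (Δ[n] : SSet.{u}) _⦋d'⦌} (hx : StrictMono x) (hy : StrictMono y) :
    Subcomplex.ofSimplex x ≤ Subcomplex.ofSimplex y ↔ Set.range x ⊆ Set.range y := by
  rw [ofSimplex_eq_face_image x hx, ofSimplex_eq_face_image y hy, face_le_face_iff,
    ← Finset.coe_subset]
  simp

/-- The type (II) simplices of the pairing: nondegenerate simplices of dimension `dim + 1`
whose last two vertices are not adjacent. -/
structure SpinePairingIndex (n : ℕ) where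
  dim : ℕ
  vertices : Fin (dim + 2) ↪o Fin (n + 1)
  gap : (vertices (Fin.last dim).castSucc : ℕ) + 1 < vertices (Fin.last dim).succ

namespace SpinePairingIndex

variable (s : SpinePairingIndex n)

def penultimate : Fin (n + 1) := ⟨(s.vertices (Fin.last s.dim).succ : ℕ) - 1, by omega⟩

lemma lt_penultimate : s.vertices (Fin.last s.dim).castSucc < s.penultimate := by
  have := s.gap
  simp only [penultimate, Fin.lt_def]
  omega

lemma penultimate_lt : s.penultimate < s.vertices (Fin.last s.dim).succ := by
  have := s.gap
  simp only [penultimate, Fin.lt_def]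
  omega

/-- The type (I) partner of `s`: `penultimate` is inserted just before the last vertex. -/
def filler : Fin (s.dim + 3) ↪o Fin (n + 1) :=
  OrderEmbedding.ofStrictMono _
    (Fin.strictMono_insertNth s.vertices.strictMono _ _ s.lt_penultimate s.penultimate_lt)

lemma filler_succAbove (j : Fin (s.dim + 2)) :
    s.filler ((Fin.last s.dim).castSucc.succ.succAbove j) = s.vertices j := by
  simp [filler]

lemma filler_penultimate : s.filler (Fin.last s.dim).castSucc.succ = s.penultimate := by
  simp [filler]

lemma filler_last : s.filler (Fin.last (s.dim + 2)) = s.vertices (Fin.last s.dim).succ := by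
  rw [← s.filler_succAbove]
  congr 1
  ext
  simp [Fin.succAbove, Fin.lt_def]

lemma δ_objMk_filler : (Δ[n] : SSet.{u}).δ (Fin.last s.dim).castSucc.succ
    (objMk s.filler.toOrderHom) = objMk s.vertices.toOrderHom := by
  ext j
  simp [δ_apply, filler_succAbove]

lemma vertices_zero_add_two_le :
    (s.vertices 0 : ℕ) + 2 ≤ s.vertices (Fin.last (s.dim + 1)) := by
  have h₁ := s.gap
  have h₂ : s.vertices 0 ≤ s.vertices (Fin.last s.dim).castSucc :=
    s.vertices.monotone (Fin.zero_le _)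
  rw [Fin.le_def] at h₂
  rw [← Fin.succ_last]
  omega

lemma eq_of_sMk_eq {s t : SpinePairingIndex n}
    (h : S.mk (objMk.{u} s.vertices.toOrderHom : Δ[n] _⦋s.dim + 1⦌) =
      S.mk (objMk t.vertices.toOrderHom : Δ[n] _⦋t.dim + 1⦌)) :
    s = t := by
  obtain ⟨d, y, hy⟩ := s
  obtain ⟨d', y', hy'⟩ := t
  obtain rfl : d = d' := by simpa using S.dim_eq_of_mk_eq h
  rw [S.ext_iff] at h
  obtain rfl : y = y' := by
    ext j
    exact congrArg Fin.val (congrArg (fun z : Δ[n] _⦋d + 1⦌ => z j) h)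
  rfl

lemma exists_sMk_eq_filler_or_vertices {k : ℕ} (w : (Δ[n] : SSet.{u}) _⦋k⦌)
    (hw : StrictMono w) (hw' : w ∉ (spine n).obj _) :
    ∃ s : SpinePairingIndex n, S.mk w = S.mk (objMk s.filler.toOrderHom) ∨
      S.mk w = S.mk (objMk s.vertices.toOrderHom) := by
  rw [mem_spine_iff] at hw'
  obtain _ | k := k
  · exact absurd ⟨w 0, fun j => by rw [Fin.fin_one_eq_zero j]; omega⟩ hw'
  by_cases hgap : (w (Fin.last k).castSucc : ℕ) + 1 < w (Fin.last k).succ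
  · exact ⟨⟨k, OrderEmbedding.ofStrictMono w hw, hgap⟩,
      Or.inr ((S.ext_iff _ _).2 (stdSimplex.ext _ _ fun _ => rfl))⟩
  have hadj : (w (Fin.last k).castSucc : ℕ) + 1 = w (Fin.last k).succ := by
    have := Fin.lt_def.1 (hw (Fin.castSucc_lt_succ (i := Fin.last k)))
    omega
  obtain _ | d := k
  · refine absurd ⟨w 0, fun j => ?_⟩ hw'
    fin_cases j <;> simp_all <;> omega
  let p := (Fin.last d).castSucc.succ
  have e₁ : p.succAbove (Fin.last d).castSucc = (Fin.last d).castSucc.castSucc := by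
    ext; simp [p, Fin.succAbove, Fin.lt_def]
  have e₂ : p.succAbove (Fin.last d).succ = (Fin.last (d + 1)).succ := by
    ext; simp [p, Fin.succAbove, Fin.lt_def]
  have hgap' : (w (p.succAbove (Fin.last d).castSucc) : ℕ) + 1 <
      w (p.succAbove (Fin.last d).succ) := by
    rw [e₁, e₂, ← hadj]
    exact Nat.add_lt_add_right (Fin.lt_def.1 (hw (by simp [Fin.lt_def]))) 1
  let s : SpinePairingIndex n :=
    ⟨d, OrderEmbedding.ofStrictMono _ (hw.comp (Fin.strictMono_succAbove p)), hgap'⟩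
  refine ⟨s, Or.inl ((S.ext_iff _ _).2 (stdSimplex.ext _ _ fun j => ?_))⟩
  obtain rfl | ⟨j, rfl⟩ := p.eq_self_or_eq_succAbove j
  · change w p = s.filler p
    rw [s.filler_penultimate]
    ext
    have hp : (w p : ℕ) + 1 = w (Fin.last (d + 1)).succ := hadj
    simp only [penultimate, s, OrderEmbedding.coe_ofStrictMono, Function.comp_apply, e₂]
    omega
  · exact (s.filler_succAbove j).symm

def rank : ℕ ×ₗ ℕ := toLex ((s.vertices (Fin.last s.dim).succ : ℕ), s.dim)

end SpinePairingIndex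

variable (n) in
noncomputable def spinePairingCore : (spine.{u} n).PairingCore where
  ι := SpinePairingIndex n
  dim s := s.dim + 1
  simplex s := objMk s.filler.toOrderHom
  index s := (Fin.last s.dim).castSucc.succ
  nonDegenerate₁ s := (mem_nonDegenerate_iff_strictMono _).2 s.filler.strictMono
  nonDegenerate₂ s := by
    rw [s.δ_objMk_filler]
    exact (mem_nonDegenerate_iff_strictMono _).2 s.vertices.strictMono
  notMem₁ s := notMem_spine_of_add_two_le (i := (Fin.last s.dim).castSucc.succ.succAbove 0)
    (j := (Fin.last s.dim).castSucc.succ.succAbove (Fin.last _)) _ (by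
      change (s.filler _ : ℕ) + 2 ≤ s.filler _
      simpa only [s.filler_succAbove] using s.vertices_zero_add_two_le)
  notMem₂ s := by
    rw [s.δ_objMk_filler]
    exact notMem_spine_of_add_two_le (i := 0) (j := Fin.last _) _ s.vertices_zero_add_two_le
  injective_type₁' {s t} h := by
    apply SpinePairingIndex.eq_of_sMk_eq.{u}
    obtain ⟨d, y, hy⟩ := s
    obtain ⟨d', y', hy'⟩ := t
    obtain rfl : d = d' := by simpa using S.dim_eq_of_mk_eq h
    rw [S.ext_iff] at h
    have := congrArg (Δ[n].δ (Fin.last d).castSucc.succ) h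
    rw [SpinePairingIndex.δ_objMk_filler ⟨d, y, hy⟩,
      SpinePairingIndex.δ_objMk_filler ⟨d, y', hy'⟩] at this
    rw [this]
  injective_type₂' {s t} h := by
    rw [s.δ_objMk_filler, t.δ_objMk_filler] at h
    exact SpinePairingIndex.eq_of_sMk_eq h
  type₁_ne_type₂' s t h := by
    rw [t.δ_objMk_filler] at h
    obtain ⟨d', y', hy'⟩ := t
    obtain rfl : d' = s.dim + 1 := by simpa using (S.dim_eq_of_mk_eq h).symm
    rw [S.ext_iff] at h
    have h₁ : (s.filler (Fin.last s.dim).castSucc.succ : ℕ) =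
        y' (Fin.last (s.dim + 1)).castSucc :=
      congrArg (fun z : Δ[n] _⦋s.dim + 2⦌ => (z (Fin.last (s.dim + 1)).castSucc : ℕ)) h
    have h₂ : (s.filler (Fin.last (s.dim + 2)) : ℕ) = y' (Fin.last (s.dim + 1)).succ :=
      congrArg (fun z : Δ[n] _⦋s.dim + 2⦌ => (z (Fin.last (s.dim + 2)) : ℕ)) h
    rw [s.filler_penultimate] at h₁
    rw [s.filler_last] at h₂
    have := s.gap
    simp only [SpinePairingIndex.penultimate] at h₁
    omega
  surjective' x := by
    obtain ⟨k, w, hw, hw', rfl⟩ := x.mk_surjective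
    obtain ⟨s, h | h⟩ := SpinePairingIndex.exists_sMk_eq_filler_or_vertices w
      ((mem_nonDegenerate_iff_strictMono w).1 hw) hw'
    · exact ⟨s, Or.inl h⟩
    · exact ⟨s, Or.inr (by rw [s.δ_objMk_filler]; exact h)⟩

instance : (spinePairingCore.{u} n).IsInner where
  ne_zero s := Fin.succ_ne_zero (Fin.last s.dim).castSucc
  ne_last s := by simp [spinePairingCore, Fin.ext_iff]

lemma SpinePairingIndex.rank_lt_of_ancestralRel {s t : SpinePairingIndex n}
    (h : (spinePairingCore.{u} n).AncestralRel s t) : s.rank < t.rank := by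
  obtain ⟨hst, hlt⟩ := h
  have hface : Set.range s.vertices ⊆ Set.range t.filler := by
    have hle : Subcomplex.ofSimplex (objMk.{u} s.vertices.toOrderHom : Δ[n] _⦋s.dim + 1⦌) ≤
        Subcomplex.ofSimplex (objMk.{u} t.filler.toOrderHom : Δ[n] _⦋t.dim + 2⦌) := by
      rw [← s.δ_objMk_filler]
      exact hlt.le
    rwa [ofSimplex_le_ofSimplex_iff s.vertices.strictMono t.filler.strictMono] at hle
  have hlast : s.vertices (Fin.last s.dim).succ ≤ t.vertices (Fin.last t.dim).succ := by
    obtain ⟨j, hj⟩ := hface ⟨(Fin.last s.dim).succ, rfl⟩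
    rw [← hj, ← t.filler_last]
    exact t.filler.monotone (Fin.le_last j)
  rw [rank, rank, Prod.Lex.toLex_lt_toLex']
  refine ⟨hlast, fun heq => ?_⟩
  simp only at heq
  have hpen : s.penultimate = t.penultimate := Fin.ext (by simp only [penultimate, heq])
  have hface₁ : Set.range s.filler ⊆ Set.range t.filler := by
    rintro _ ⟨j, rfl⟩
    obtain rfl | ⟨j, rfl⟩ := (Fin.last s.dim).castSucc.succ.eq_self_or_eq_succAbove j
    · exact ⟨(Fin.last t.dim).castSucc.succ, by
        rw [s.filler_penultimate, t.filler_penultimate, hpen]⟩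
    · rw [s.filler_succAbove]
      exact hface ⟨j, rfl⟩
  have hle₁ : (spinePairingCore n).type₁ s ≤ (spinePairingCore n).type₁ t :=
    (ofSimplex_le_ofSimplex_iff s.filler.strictMono t.filler.strictMono).2 hface₁
  obtain hlt₁ | heq₁ := hle₁.lt_or_eq
  · have : s.dim + 2 < t.dim + 2 := N.dim_lt_of_lt hlt₁
    omega
  · exact absurd ((spinePairingCore n).injective_type₁ heq₁) hst

instance : (spinePairingCore.{u} n).IsRegular where
  wf := Subrelation.wf SpinePairingIndex.rank_lt_of_ancestralRel (InvImage.wf _ wellFounded_lt)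

lemma innerAnodyneExtensions_spine_ι : innerAnodyneExtensions (spine.{u} n).ι :=
  (spinePairingCore n).pairing.innerAnodyneExtensions

end SSet.stdSimplex

/-- The inclusion of the spine `Sp(n) → Δ[n]` is inner anodyne, i.e. it lies in the
saturation of the inner horn inclusions: it has the left lifting property with respect
to every morphism of simplicial sets having the right lifting property with respect to
all inner horn inclusions `Λ[m,k] → Δ[m]` (`0 < k < m`).  In particular, every
quasi-category `X` has the right lifting property with respect to `Sp(n) → Δ[n]`:
every map `Sp(n) ⟶ X` extends to `Δ[n] ⟶ X`. -/
theorem spine_inclusion_innerAnodyne (n : ℕ) :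
    (∀ {E B : SSet.{u}} (p : E ⟶ B),
        (∀ (m : ℕ) (k : Fin (m + 1)), 0 < (k : ℕ) → (k : ℕ) < m →
          HasLiftingProperty (SSet.horn m k).ι p) →
        HasLiftingProperty (SSet.spineSubcomplexInclusion.{u} n) p) ∧
    (∀ (X : SSet.{u}) [SSet.Quasicategory X] (f : SSet.spineSubcomplex.{u} n ⟶ X),
        ∃ g : Δ[n] ⟶ X, SSet.spineSubcomplexInclusion n ≫ g = f) := by
  have h : SSet.innerAnodyneExtensions (SSet.spineSubcomplexInclusion.{u} n) :=
    SSet.stdSimplex.innerAnodyneExtensions_spine_ι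
  refine ⟨fun p hp => h p fun _ _ _ ⟨i, h0, hi⟩ => hp _ i h0 hi, fun X _ f => ?_⟩
  have : HasLiftingProperty (SSet.spineSubcomplexInclusion n) (Limits.terminal.from X) :=
    h _ (SSet.mem_innerFibrations _)
  have sq : CommSq f (SSet.spineSubcomplexInclusion n) (Limits.terminal.from X)
      (Limits.terminal.from _) := ⟨Limits.terminal.hom_ext _ _⟩
  exact ⟨sq.lift, sq.fac_left⟩
end
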